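/- Let F(t,ζ) = -t + ζ t Q + ζ t² S(t) where Q > 0 is a constant and S : (-T,T) → ℝ is smooth with |S(t)| ≤ M and |S'(t)| ≤ M. If T > 0 is small enough (depending on Q and M), then on (-T,T) × (0,∞) the function F has a unique stationary point (t₀, ζ₀) = (0, 1/Q), the stationary point is nondegenerate, and det Hess F(0, 1/Q) = -Q² < 0. -/

import Mathlib

theorem stationary_point_of_model_phase (Q M : ℝ) (hQ : 0 < Q) (hM : 0 ≤ M)
    (S : ℝ → ℝ) (hS : ContDiff ℝ (⊤ : ℕ∞) S)
    (hSbound : ∀ t, |S t| ≤ M) (hS'bound : ∀ t, |deriv S t| ≤ M)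
    (F : ℝ → ℝ → ℝ) (hF : ∀ t ζ, F t ζ = -t + ζ * t * Q + ζ * t ^ 2 * S t) :
    ∃ T₀ > (0 : ℝ),
      (∀ t ζ : ℝ, t ∈ Set.Ioo (-T₀) T₀ → 0 < ζ →
        ((deriv (fun s => F s ζ) t = 0 ∧ deriv (fun z => F t z) ζ = 0) ↔
          (t = 0 ∧ ζ = 1 / Q))) ∧
      (deriv (fun s => deriv (fun s' => F s' (1 / Q)) s) 0) *
          (deriv (fun z => deriv (fun z' => F 0 z') z) (1 / Q)) -
        (deriv (fun z => deriv (fun s => F s z) 0) (1 / Q)) ^ 2 = -Q ^ 2 ∧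
      -Q ^ 2 < 0 := by
  have hSd : ∀ t, HasDerivAt S (deriv S t) t := fun t =>
    ((hS.differentiable (by simp)) t).hasDerivAt
  -- derivative in t
  have hdt : ∀ t ζ : ℝ, HasDerivAt (fun s => F s ζ)
      (-1 + ζ * Q + ζ * (2 * t * S t + t ^ 2 * deriv S t)) t := by
    intro t ζ
    have hfun : (fun s => F s ζ) = fun s => -s + ζ * s * Q + ζ * s ^ 2 * S s :=
      funext fun s => hF s ζ
    rw [hfun]
    have hsq : HasDerivAt (fun s : ℝ => s ^ 2 * S s)
        (2 * t * S t + t ^ 2 * deriv S t) t := by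
      have := (hasDerivAt_pow 2 t).mul (hSd t)
      convert this using 1 <;> try rfl
      norm_num
    have h := ((hasDerivAt_id t).neg.add
        (((hasDerivAt_id t).const_mul ζ).mul_const Q)).add (hsq.const_mul ζ)
    convert h using 1 <;> try rfl
    · funext s; simp only [id, Pi.add_apply, Pi.neg_apply]; ring
    · ring
  -- derivative in ζ
  have hdz : ∀ t ζ : ℝ, HasDerivAt (fun z => F t z) (t * Q + t ^ 2 * S t) ζ := by
    intro t ζ
    have hfun : (fun z => F t z) = fun z => -t + z * t * Q + z * t ^ 2 * S t :=
      funext fun z => hF t z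
    rw [hfun]
    have h := ((hasDerivAt_const ζ (-t)).add
        (((hasDerivAt_id ζ).mul_const t).mul_const Q)).add
        (((hasDerivAt_id ζ).mul_const (t ^ 2)).mul_const (S t))
    convert h using 1 <;> try rfl
    ring
  refine ⟨Q / (2 * (M + 1)), by positivity, ?_, ?_, by nlinarith⟩
  · intro t ζ ht hζ
    rw [(hdt t ζ).deriv, (hdz t ζ).deriv]
    constructor
    · rintro ⟨h1, h2⟩
      have habs : |t| < Q / (2 * (M + 1)) := abs_lt.2 ⟨ht.1, ht.2⟩
      have hpos : 0 < Q + t * S t := by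
        have h3 : |t * S t| ≤ |t| * M := by
          rw [abs_mul]
          exact mul_le_mul_of_nonneg_left (hSbound t) (abs_nonneg t)
        have h4 : |t| * M < Q := by
          calc |t| * M ≤ (Q / (2 * (M + 1))) * M := by
                exact mul_le_mul_of_nonneg_right habs.le hM
            _ < Q := by
                rw [div_mul_eq_mul_div, div_lt_iff₀ (by positivity)]
                nlinarith
        nlinarith [abs_le.1 h3, neg_abs_le (t * S t)]
      have ht0 : t = 0 := by
        have : t * (Q + t * S t) = 0 := by nlinarith
        rcases mul_eq_zero.1 this with h | h
        · exact h
        · exact absurd h (ne_of_gt hpos)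
      subst ht0
      have : ζ * Q = 1 := by nlinarith [hS'bound 0, hSbound 0]
      exact ⟨rfl, by field_simp; linarith⟩
    · rintro ⟨rfl, rfl⟩
      constructor
      · field_simp; ring
      · ring
  · -- Hessian determinant
    have hB : (fun z => deriv (fun z' => F 0 z') z) = fun _ => (0 : ℝ) := by
      funext z
      have : (fun z' => F 0 z') = fun _ => (0 : ℝ) := by
        funext z'; rw [hF]; ring
      rw [this, deriv_const]
    have hC : (fun z => deriv (fun s => F s z) 0) = fun z => -1 + z * Q := by
      funext z
      rw [(hdt 0 z).deriv]
      ring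
    rw [hB, hC, deriv_const]
    have : HasDerivAt (fun z : ℝ => -1 + z * Q) Q (1 / Q) := by
      have := (hasDerivAt_const (1 / Q) (-1 : ℝ)).add ((hasDerivAt_id (1 / Q)).mul_const Q)
      exact this.congr_deriv (by ring)
    rw [this.deriv]
    ring
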